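/- Let φ(x) = 2·cosh(x)^{-2} and define, for a continuous square-integrable f : ℝ → ℝ, I(f)(x) = φ(x)·∫₀^x f(t)·φ(t)^{-1} dt. There exists C > 0 such that for every such f, I(f) is of class C¹, satisfies I(f)'(x) + 2 tanh(x)·I(f)(x) = f(x) for all x, and obeys ‖I(f)‖_{L²(ℝ)} + ‖I(f)'‖_{L²(ℝ)} ≤ C·‖f‖_{L²(ℝ)}. -/

import Mathlib

open MeasureTheory Real

open Set

open scoped ENNReal

/-- The KdV soliton profile with `c = 2`: `φ(x) = 2 cosh(x)⁻² = 2 sech²(x)`. -/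
noncomputable def phi2 (x : ℝ) : ℝ := 2 / (Real.cosh x) ^ 2


lemma phi2_pos (x : ℝ) : 0 < phi2 x := by
  unfold phi2; positivity

lemma cosh_le_exp_abs (x : ℝ) : Real.cosh x ≤ Real.exp |x| := by
  rw [Real.cosh_eq]
  rcases abs_cases x with ⟨h, h'⟩ | ⟨h, h'⟩ <;> rw [h]
  · nlinarith [Real.exp_le_exp.2 (by linarith : -x ≤ x)]
  · nlinarith [Real.exp_le_exp.2 (by linarith : x ≤ -x)]

lemma exp_abs_le_two_cosh (x : ℝ) : Real.exp |x| ≤ 2 * Real.cosh x := by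
  rw [Real.cosh_eq]
  rcases abs_cases x with ⟨h, h'⟩ | ⟨h, h'⟩ <;> rw [h] <;>
    nlinarith [Real.exp_pos x, Real.exp_pos (-x)]

-- kernel bound
lemma kernel_bound {x t : ℝ} (ht : t ∈ Set.uIoc 0 x) :
    phi2 x * (phi2 t)⁻¹ ≤ 4 * Real.exp (-|x - t|) := by
  have hxt : |x - t| = |x| - |t| := by
    rcases Set.mem_uIoc.1 ht with ⟨h1, h2⟩ | ⟨h1, h2⟩
    · rw [abs_of_nonneg (by linarith), abs_of_pos h1,
        abs_of_nonneg (by linarith : (0:ℝ) ≤ x)]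
    · rw [abs_of_nonpos (by linarith), abs_of_nonpos h2,
        abs_of_nonpos (by linarith : x ≤ 0)]; ring
  have h1 : Real.cosh t ^ 2 ≤ Real.exp |t| ^ 2 := by
    have := cosh_le_exp_abs t
    nlinarith [Real.cosh_pos t]
  have h2 : Real.exp |x| ^ 2 ≤ (2 * Real.cosh x) ^ 2 := by
    have := exp_abs_le_two_cosh x
    nlinarith [Real.exp_pos |x|]
  have hcx : (0:ℝ) < Real.cosh x ^ 2 := by positivity
  have hct : (0:ℝ) < Real.cosh t ^ 2 := by positivity
  have heq : phi2 x * (phi2 t)⁻¹ = Real.cosh t ^ 2 / Real.cosh x ^ 2 := by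
    unfold phi2; field_simp
  rw [heq, hxt]
  have habs : |t| ≤ |x| := by linarith [abs_nonneg (x - t), hxt.symm.le]
  have key : Real.exp (-(|x| - |t|)) = Real.exp |t| / Real.exp |x| := by
    rw [neg_sub, Real.exp_sub]
  rw [key, div_le_iff₀ hcx]
  have e1 : Real.exp |t| ^ 2 ≤ Real.exp |x| * Real.exp |t| := by
    have := Real.exp_le_exp.2 habs
    nlinarith [Real.exp_pos |t|]
  have e2 : Real.exp |x| * Real.exp |t| ≤ 4 * Real.exp |t| / Real.exp |x| * Real.cosh x ^ 2 := by
    rw [div_mul_eq_mul_div, le_div_iff₀ (Real.exp_pos _)]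
    nlinarith [Real.exp_pos |t|, Real.exp_pos |x|, Real.cosh_pos x]
  calc Real.cosh t ^ 2 ≤ Real.exp |t| ^ 2 := h1
    _ ≤ Real.exp |x| * Real.exp |t| := e1
    _ ≤ 4 * Real.exp |t| / Real.exp |x| * Real.cosh x ^ 2 := e2
    _ = 4 * (Real.exp |t| / Real.exp |x|) * Real.cosh x ^ 2 := by ring

lemma lintegral_exp_kernel (c : ℝ) :
    ∫⁻ x : ℝ, ENNReal.ofReal (Real.exp (-|x - c|)) = 2 := by
  have e1 : (fun x : ℝ => Real.exp (x - c)) = fun x => Real.exp x * Real.exp (-c) :=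
    funext fun x => by rw [← Real.exp_add]; ring_nf
  have e2 : (fun x : ℝ => Real.exp (c - x)) = fun x => Real.exp (-1 * x) * Real.exp c :=
    funext fun x => by rw [← Real.exp_add]; ring_nf
  have hIic : IntegrableOn (fun x => Real.exp (x - c)) (Iic c) := by
    rw [e1]; exact (integrableOn_exp_Iic c).mul_const _
  have vIic : ∫ x in Iic c, Real.exp (x - c) = 1 := by
    rw [e1, integral_mul_const, integral_exp_Iic, ← Real.exp_add]; simp
  have hIoi : IntegrableOn (fun x => Real.exp (c - x)) (Ioi c) := by
    rw [e2]; exact (exp_neg_integrableOn_Ioi c (by norm_num : (0:ℝ) < 1)).mul_const _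
  have vIoi : ∫ x in Ioi c, Real.exp (c - x) = 1 := by
    rw [e2]
    simp_rw [neg_one_mul]
    rw [integral_mul_const, integral_exp_neg_Ioi, ← Real.exp_add]; simp
  rw [← lintegral_add_compl (μ := volume)
      (f := fun x : ℝ => ENNReal.ofReal (Real.exp (-|x - c|))) (measurableSet_Iic (a := c)),
    compl_Iic]
  have c1 : ∫⁻ x in Iic c, ENNReal.ofReal (Real.exp (-|x - c|)) = 1 := by
    rw [show (1 : ℝ≥0∞) = ENNReal.ofReal (∫ x in Iic c, Real.exp (x - c)) by
      rw [vIic]; simp]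
    rw [ofReal_integral_eq_lintegral_ofReal hIic
      (Filter.Eventually.of_forall fun x => (Real.exp_pos _).le)]
    refine setLIntegral_congr_fun measurableSet_Iic
      (fun x hx => ?_)
    congr 1
    rw [abs_of_nonpos (by simp at hx; linarith), neg_neg]
  have c2 : ∫⁻ x in Ioi c, ENNReal.ofReal (Real.exp (-|x - c|)) = 1 := by
    rw [show (1 : ℝ≥0∞) = ENNReal.ofReal (∫ x in Ioi c, Real.exp (c - x)) by
      rw [vIoi]; simp]
    rw [ofReal_integral_eq_lintegral_ofReal hIoi
      (Filter.Eventually.of_forall fun x => (Real.exp_pos _).le)]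
    refine setLIntegral_congr_fun measurableSet_Ioi
      (fun x hx => ?_)
    congr 1
    rw [abs_of_nonneg (by simp at hx; linarith)]; ring
  rw [c1, c2]; norm_num

example : Real.HolderConjugate 2 2 := by constructor <;> norm_num

lemma row_bound (x : ℝ) :
    ∫⁻ t in Set.uIoc 0 x, ENNReal.ofReal (4 * Real.exp (-|x - t|)) ≤ 8 := by
  refine le_trans (setLIntegral_le_lintegral _ _) ?_
  simp_rw [ENNReal.ofReal_mul (by norm_num : (0:ℝ) ≤ 4)]
  rw [lintegral_const_mul' _ _ ENNReal.ofReal_ne_top]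
  simp_rw [abs_sub_comm x]
  rw [lintegral_exp_kernel x]
  rw [show ENNReal.ofReal 4 = 4 by norm_num]
  norm_num

lemma continuous_phi2 : Continuous phi2 := by
  unfold phi2
  exact continuous_const.div (Real.continuous_cosh.pow 2)
    (fun x => by positivity)

lemma continuous_phi2_inv : Continuous fun t => (phi2 t)⁻¹ :=
  continuous_phi2.inv₀ fun t => (phi2_pos t).ne'

lemma sq_half_rpow (u : ℝ≥0∞) : (u ^ ((1:ℝ)/2)) ^ (2:ℕ) = u := by
  rw [← ENNReal.rpow_natCast, ← ENNReal.rpow_mul]; norm_num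

lemma stepA {f : ℝ → ℝ} (hf : Continuous f) (x : ℝ) :
    ENNReal.ofReal ((phi2 x * ∫ t in (0:ℝ)..x, f t * (phi2 t)⁻¹) ^ 2)
      ≤ 8 * ∫⁻ t in Set.uIoc 0 x, ENNReal.ofReal (4 * Real.exp (-|x - t|) * f t ^ 2) := by
  set g : ℝ → ℝ := fun t => phi2 x * (f t * (phi2 t)⁻¹) with hg
  have hg_cont : Continuous g := continuous_const.mul (hf.mul continuous_phi2_inv)
  have hI : phi2 x * ∫ t in (0:ℝ)..x, f t * (phi2 t)⁻¹ = ∫ t in (0:ℝ)..x, g t := by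
    rw [intervalIntegral.integral_const_mul]
  have habs : |∫ t in (0:ℝ)..x, g t| ≤ ∫ t in Set.uIoc 0 x, |g t| := by
    simpa [Real.norm_eq_abs] using
      (intervalIntegral.norm_integral_le_integral_norm_uIoc (f := g) (a := 0) (b := x)
        (μ := volume))
  have hInt : IntegrableOn (fun t => |g t|) (Set.uIoc 0 x) :=
    intervalIntegrable_iff.mp (hg_cont.abs.intervalIntegrable 0 x)
  set r : ℝ → ℝ := fun t => 4 * Real.exp (-|x - t|) with hr
  have hr_cont : Continuous r :=
    continuous_const.mul (Real.continuous_exp.comp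
      ((continuous_const.sub continuous_id).abs.neg))
  have hr_nonneg : ∀ t, 0 ≤ r t := fun t => by positivity
  set A : ℝ → ℝ≥0∞ := fun t => ENNReal.ofReal (Real.sqrt (r t)) with hA
  set B : ℝ → ℝ≥0∞ := fun t => ENNReal.ofReal (Real.sqrt (r t) * |f t|) with hB
  have hA_meas : AEMeasurable A (volume.restrict (Set.uIoc 0 x)) :=
    (ENNReal.continuous_ofReal.comp hr_cont.sqrt).measurable.aemeasurable
  have hB_meas : AEMeasurable B (volume.restrict (Set.uIoc 0 x)) :=
    (ENNReal.continuous_ofReal.comp (hr_cont.sqrt.mul hf.abs)).measurable.aemeasurable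
  have hconj : Real.HolderConjugate 2 2 := by constructor <;> norm_num
  have CS := ENNReal.lintegral_mul_le_Lp_mul_Lq (volume.restrict (Set.uIoc 0 x)) hconj
    hA_meas hB_meas
  have hptwise : ∀ t ∈ Set.uIoc 0 x, ENNReal.ofReal |g t| ≤ A t * B t := by
    intro t ht
    have hk := kernel_bound ht
    have h1 : |g t| ≤ r t * |f t| := by
      have : |g t| = (phi2 x * (phi2 t)⁻¹) * |f t| := by
        rw [hg]
        rw [abs_mul, abs_mul, abs_of_pos (phi2_pos x), abs_of_pos (inv_pos.2 (phi2_pos t))]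
        ring
      rw [this]
      exact mul_le_mul_of_nonneg_right hk (abs_nonneg _)
    have h2 : r t * |f t| = Real.sqrt (r t) * (Real.sqrt (r t) * |f t|) := by
      rw [← mul_assoc, Real.mul_self_sqrt (hr_nonneg t)]
    calc ENNReal.ofReal |g t| ≤ ENNReal.ofReal (Real.sqrt (r t) * (Real.sqrt (r t) * |f t|)) :=
          ENNReal.ofReal_le_ofReal (h2 ▸ h1)
      _ = A t * B t := ENNReal.ofReal_mul (Real.sqrt_nonneg _)
  have hAsq : ∀ t, A t ^ (2:ℝ) = ENNReal.ofReal (r t) := by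
    intro t
    show ENNReal.ofReal (Real.sqrt (r t)) ^ (2:ℝ) = ENNReal.ofReal (r t)
    rw [ENNReal.ofReal_rpow_of_nonneg (Real.sqrt_nonneg _) (by norm_num : (0:ℝ) ≤ 2),
      show (2:ℝ) = ((2:ℕ):ℝ) by norm_num, Real.rpow_natCast, Real.sq_sqrt (hr_nonneg t)]
  have hBsq : ∀ t, B t ^ (2:ℝ) = ENNReal.ofReal (r t * f t ^ 2) := by
    intro t
    show ENNReal.ofReal (Real.sqrt (r t) * |f t|) ^ (2:ℝ) = ENNReal.ofReal (r t * f t ^ 2)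
    rw [ENNReal.ofReal_rpow_of_nonneg
        (mul_nonneg (Real.sqrt_nonneg _) (abs_nonneg _)) (by norm_num : (0:ℝ) ≤ 2),
      show (2:ℝ) = ((2:ℕ):ℝ) by norm_num, Real.rpow_natCast,
      mul_pow, Real.sq_sqrt (hr_nonneg t), sq_abs]
  calc ENNReal.ofReal ((phi2 x * ∫ t in (0:ℝ)..x, f t * (phi2 t)⁻¹) ^ 2)
      = ENNReal.ofReal (|∫ t in (0:ℝ)..x, g t|) ^ (2:ℕ) := by
        rw [hI, ← ENNReal.ofReal_pow (abs_nonneg _), sq_abs]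
    _ ≤ ENNReal.ofReal (∫ t in Set.uIoc 0 x, |g t|) ^ (2:ℕ) :=
        pow_le_pow_left' (ENNReal.ofReal_le_ofReal habs) 2
    _ = (∫⁻ t in Set.uIoc 0 x, ENNReal.ofReal |g t|) ^ (2:ℕ) := by
        rw [ofReal_integral_eq_lintegral_ofReal hInt
          (Filter.Eventually.of_forall fun t => abs_nonneg _)]
    _ ≤ (∫⁻ t in Set.uIoc 0 x, A t * B t) ^ (2:ℕ) :=
        pow_le_pow_left' (setLIntegral_mono' measurableSet_uIoc hptwise) 2
    _ ≤ ((∫⁻ t in Set.uIoc 0 x, A t ^ (2:ℝ)) ^ ((1:ℝ)/2)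
          * (∫⁻ t in Set.uIoc 0 x, B t ^ (2:ℝ)) ^ ((1:ℝ)/2)) ^ (2:ℕ) :=
        pow_le_pow_left' CS 2
    _ = (∫⁻ t in Set.uIoc 0 x, A t ^ (2:ℝ)) * (∫⁻ t in Set.uIoc 0 x, B t ^ (2:ℝ)) := by
        rw [mul_pow, sq_half_rpow, sq_half_rpow]
    _ ≤ 8 * ∫⁻ t in Set.uIoc 0 x, ENNReal.ofReal (4 * Real.exp (-|x - t|) * f t ^ 2) := by
        simp_rw [hAsq, hBsq]
        exact mul_le_mul' (row_bound x) le_rfl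

lemma stepB {f : ℝ → ℝ} (hf : Continuous f) :
    ∫⁻ x : ℝ, ENNReal.ofReal ((phi2 x * ∫ t in (0:ℝ)..x, f t * (phi2 t)⁻¹) ^ 2)
      ≤ 64 * ∫⁻ t : ℝ, ENNReal.ofReal (f t ^ 2) := by
  have hker : Continuous fun p : ℝ × ℝ => 4 * Real.exp (-|p.1 - p.2|) * f p.2 ^ 2 :=
    (continuous_const.mul (Real.continuous_exp.comp
      ((continuous_fst.sub continuous_snd).abs.neg))).mul ((hf.comp continuous_snd).pow 2)
  have hmeas : AEMeasurable (Function.uncurry fun x t : ℝ =>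
      ENNReal.ofReal (4 * Real.exp (-|x - t|) * f t ^ 2))
      ((volume : Measure ℝ).prod (volume : Measure ℝ)) :=
    (ENNReal.continuous_ofReal.comp hker).measurable.aemeasurable
  calc ∫⁻ x : ℝ, ENNReal.ofReal ((phi2 x * ∫ t in (0:ℝ)..x, f t * (phi2 t)⁻¹) ^ 2)
      ≤ ∫⁻ x : ℝ, 8 * ∫⁻ t in Set.uIoc 0 x,
          ENNReal.ofReal (4 * Real.exp (-|x - t|) * f t ^ 2) :=
        lintegral_mono fun x => stepA hf x
    _ ≤ ∫⁻ x : ℝ, 8 * ∫⁻ t : ℝ, ENNReal.ofReal (4 * Real.exp (-|x - t|) * f t ^ 2) :=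
        lintegral_mono fun x => mul_le_mul' le_rfl (setLIntegral_le_lintegral _ _)
    _ = 8 * ∫⁻ x : ℝ, ∫⁻ t : ℝ, ENNReal.ofReal (4 * Real.exp (-|x - t|) * f t ^ 2) :=
        lintegral_const_mul' _ _ (by norm_num)
    _ = 8 * ∫⁻ t : ℝ, ∫⁻ x : ℝ, ENNReal.ofReal (4 * Real.exp (-|x - t|) * f t ^ 2) := by
        rw [lintegral_lintegral_swap hmeas]
    _ = 8 * ∫⁻ t : ℝ, ∫⁻ x : ℝ,
          ENNReal.ofReal (Real.exp (-|x - t|)) * ENNReal.ofReal (4 * f t ^ 2) := by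
        congr 1
        refine lintegral_congr fun t => lintegral_congr fun x => ?_
        rw [← ENNReal.ofReal_mul (Real.exp_pos _).le]
        congr 1; ring
    _ = 8 * ∫⁻ t : ℝ, 2 * ENNReal.ofReal (4 * f t ^ 2) := by
        congr 1
        refine lintegral_congr fun t => ?_
        rw [lintegral_mul_const' _ _ ENNReal.ofReal_ne_top, lintegral_exp_kernel t]
    _ = 64 * ∫⁻ t : ℝ, ENNReal.ofReal (f t ^ 2) := by
        simp_rw [ENNReal.ofReal_mul (by norm_num : (0:ℝ) ≤ 4), ← mul_assoc]
        rw [lintegral_const_mul' (2 * ENNReal.ofReal 4) _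
          (by simp [ENNReal.mul_eq_top] : (2 : ℝ≥0∞) * ENNReal.ofReal 4 ≠ ⊤), ← mul_assoc]
        congr 1
        rw [show ENNReal.ofReal 4 = 4 by norm_num]
        norm_num

lemma hasDerivAt_phi2 (x : ℝ) : HasDerivAt phi2 (-2 * Real.tanh x * phi2 x) x := by
  have h1 : HasDerivAt (fun x => Real.cosh x ^ 2) (2 * Real.cosh x * Real.sinh x) x := by
    simpa using (Real.hasDerivAt_cosh x).fun_pow 2
  have h2 : HasDerivAt (fun x => 2 / Real.cosh x ^ 2)
      ((0 * Real.cosh x ^ 2 - 2 * (2 * Real.cosh x * Real.sinh x)) / (Real.cosh x ^ 2) ^ 2) x :=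
    (hasDerivAt_const x 2).div h1 (by positivity)
  have heq : (0 * Real.cosh x ^ 2 - 2 * (2 * Real.cosh x * Real.sinh x)) / (Real.cosh x ^ 2) ^ 2
      = -2 * Real.tanh x * phi2 x := by
    rw [Real.tanh_eq_sinh_div_cosh]
    unfold phi2
    have := Real.cosh_pos x
    field_simp
    ring
  rw [heq] at h2
  exact h2

lemma If_hasDerivAt {f : ℝ → ℝ} (hf : Continuous f) (x : ℝ) :
    HasDerivAt (fun x => phi2 x * ∫ t in (0:ℝ)..x, f t * (phi2 t)⁻¹)
      (-2 * Real.tanh x * (phi2 x * ∫ t in (0:ℝ)..x, f t * (phi2 t)⁻¹) + f x) x := by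
  have hg : Continuous fun t => f t * (phi2 t)⁻¹ := hf.mul continuous_phi2_inv
  have hF : HasDerivAt (fun x => ∫ t in (0:ℝ)..x, f t * (phi2 t)⁻¹) (f x * (phi2 x)⁻¹) x :=
    intervalIntegral.integral_hasDerivAt_right (hg.intervalIntegrable 0 x)
      (hg.stronglyMeasurableAtFilter _ _) hg.continuousAt
  have := (hasDerivAt_phi2 x).fun_mul hF
  refine this.congr_deriv ?_
  have := (phi2_pos x).ne'
  rw [show phi2 x * (f x * (phi2 x)⁻¹) = f x by field_simp]
  ring

lemma tanh_sq_le_one (x : ℝ) : Real.tanh x ^ 2 ≤ 1 := by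
  rw [Real.tanh_eq_sinh_div_cosh, div_pow, div_le_one (by positivity)]
  nlinarith [Real.cosh_sq x, Real.cosh_pos x]

/-- Solvability, with `L²` bounds, of the ODE `I(f)' + 2 tanh(x) I(f) = f` via the explicit
formula `I(f)(x) = φ(x) ∫₀^x f(t) φ(t)⁻¹ dt`. -/
theorem claim_If :
    ∃ C > 0, ∀ f : ℝ → ℝ, Continuous f → MemLp f 2 volume →
      ∀ If : ℝ → ℝ, (∀ x : ℝ, If x = phi2 x * ∫ t in (0 : ℝ)..x, f t * (phi2 t)⁻¹) →
        ContDiff ℝ 1 If ∧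
        (∀ x : ℝ, deriv If x + 2 * Real.tanh x * If x = f x) ∧
        Real.sqrt (∫ x : ℝ, (If x) ^ 2) + Real.sqrt (∫ x : ℝ, (deriv If x) ^ 2)
          ≤ C * Real.sqrt (∫ x : ℝ, (f x) ^ 2) := by
  refine ⟨100, by norm_num, fun f hf hf2 If hIfx => ?_⟩
  have hIf : If = fun x => phi2 x * ∫ t in (0:ℝ)..x, f t * (phi2 t)⁻¹ := funext hIfx
  subst hIf
  set If : ℝ → ℝ := fun x => phi2 x * ∫ t in (0:ℝ)..x, f t * (phi2 t)⁻¹ with hIf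
  have hD : ∀ x, HasDerivAt If (-2 * Real.tanh x * If x + f x) x := If_hasDerivAt hf
  have hderiv : deriv If = fun x => -2 * Real.tanh x * If x + f x :=
    funext fun x => (hD x).deriv
  have hIf_cont : Continuous If :=
    Differentiable.continuous (fun x => (hD x).differentiableAt)
  have hderiv_cont : Continuous (deriv If) := by
    rw [hderiv]
    have ct : Continuous Real.tanh := by
      have h : Real.tanh = fun x => Real.sinh x / Real.cosh x :=
        funext Real.tanh_eq_sinh_div_cosh
      rw [h]
      exact Real.continuous_sinh.div Real.continuous_cosh fun x => (Real.cosh_pos x).ne'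
    exact ((continuous_const.mul ct).mul hIf_cont).add hf
  refine ⟨contDiff_one_iff_deriv.2 ⟨fun x => (hD x).differentiableAt, hderiv_cont⟩,
    fun x => by rw [hderiv]; ring, ?_⟩
  -- integrability of f ^ 2
  have hfsq : Integrable (fun x : ℝ => f x ^ 2) := hf2.integrable_sq
  have hfsq_nonneg : (0:ℝ) ≤ ∫ x : ℝ, f x ^ 2 := integral_nonneg fun x => sq_nonneg _
  have Nf_eq : ENNReal.ofReal (∫ x : ℝ, f x ^ 2) = ∫⁻ x : ℝ, ENNReal.ofReal (f x ^ 2) :=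
    ofReal_integral_eq_lintegral_ofReal hfsq (Filter.Eventually.of_forall fun x => sq_nonneg _)
  have hNf_top : (∫⁻ x : ℝ, ENNReal.ofReal (f x ^ 2)) ≠ ⊤ := by
    rw [← Nf_eq]; exact ENNReal.ofReal_ne_top
  have hB : ∫⁻ x : ℝ, ENNReal.ofReal (If x ^ 2) ≤ 64 * ∫⁻ t : ℝ, ENNReal.ofReal (f t ^ 2) :=
    stepB hf
  have hNIf_top : (∫⁻ x : ℝ, ENNReal.ofReal (If x ^ 2)) ≠ ⊤ :=
    ne_top_of_le_ne_top (ENNReal.mul_ne_top (by norm_num) hNf_top) hB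
  have hIfsq_int : Integrable (fun x : ℝ => If x ^ 2) := by
    refine ⟨(hIf_cont.pow 2).aestronglyMeasurable, ?_⟩
    rw [hasFiniteIntegral_iff_ofReal (Filter.Eventually.of_forall fun x => sq_nonneg _)]
    exact lt_top_iff_ne_top.2 hNIf_top
  have hIfsq_eq : ENNReal.ofReal (∫ x : ℝ, If x ^ 2) = ∫⁻ x : ℝ, ENNReal.ofReal (If x ^ 2) :=
    ofReal_integral_eq_lintegral_ofReal hIfsq_int
      (Filter.Eventually.of_forall fun x => sq_nonneg _)
  have key1 : ∫ x : ℝ, If x ^ 2 ≤ 64 * ∫ x : ℝ, f x ^ 2 := by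
    rw [← ENNReal.ofReal_le_ofReal_iff (by positivity)]
    rw [hIfsq_eq, ENNReal.ofReal_mul (by norm_num : (0:ℝ) ≤ 64), Nf_eq]
    rw [show ENNReal.ofReal (64:ℝ) = 64 by norm_num]
    exact hB
  -- derivative bound
  have hdsq_le : ∀ x : ℝ, (deriv If x) ^ 2 ≤ 8 * If x ^ 2 + 2 * f x ^ 2 := by
    intro x
    rw [(hD x).deriv]
    have h1 : (1 - Real.tanh x ^ 2) * If x ^ 2 ≥ 0 :=
      mul_nonneg (by nlinarith [tanh_sq_le_one x]) (sq_nonneg _)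
    nlinarith [sq_nonneg (-2 * Real.tanh x * If x - f x)]
  have hg_int : Integrable (fun x : ℝ => 8 * If x ^ 2 + 2 * f x ^ 2) :=
    (hIfsq_int.const_mul 8).add (hfsq.const_mul 2)
  have hdsq_int : Integrable (fun x : ℝ => (deriv If x) ^ 2) := by
    refine hg_int.mono' ((hderiv_cont.pow 2).aestronglyMeasurable)
      (Filter.Eventually.of_forall fun x => ?_)
    rw [Real.norm_eq_abs, abs_of_nonneg (sq_nonneg _)]
    exact hdsq_le x
  have key2 : ∫ x : ℝ, (deriv If x) ^ 2 ≤ 514 * ∫ x : ℝ, f x ^ 2 := by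
    have h1 : ∫ x : ℝ, (deriv If x) ^ 2 ≤ ∫ x : ℝ, (8 * If x ^ 2 + 2 * f x ^ 2) :=
      integral_mono hdsq_int hg_int hdsq_le
    rw [integral_add (hIfsq_int.const_mul 8) (hfsq.const_mul 2),
      integral_const_mul, integral_const_mul] at h1
    nlinarith [key1]
  -- conclude
  have s64 : Real.sqrt (64 * ∫ x : ℝ, f x ^ 2) = 8 * Real.sqrt (∫ x : ℝ, f x ^ 2) := by
    rw [Real.sqrt_mul (by norm_num : (0:ℝ) ≤ 64),
      show (64:ℝ) = 8 ^ 2 by norm_num, Real.sqrt_sq (by norm_num : (0:ℝ) ≤ 8)]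
  have s514 : Real.sqrt (514 * ∫ x : ℝ, f x ^ 2) ≤ 23 * Real.sqrt (∫ x : ℝ, f x ^ 2) := by
    rw [Real.sqrt_mul (by norm_num : (0:ℝ) ≤ 514)]
    gcongr
    rw [show (23:ℝ) = Real.sqrt (23 ^ 2) from
      (Real.sqrt_sq (by norm_num : (0:ℝ) ≤ 23)).symm]
    exact Real.sqrt_le_sqrt (by norm_num)
  have b1 : Real.sqrt (∫ x : ℝ, If x ^ 2) ≤ 8 * Real.sqrt (∫ x : ℝ, f x ^ 2) := by
    rw [← s64]; exact Real.sqrt_le_sqrt key1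
  have b2 : Real.sqrt (∫ x : ℝ, (deriv If x) ^ 2) ≤ 23 * Real.sqrt (∫ x : ℝ, f x ^ 2) :=
    le_trans (Real.sqrt_le_sqrt key2) s514
  have hs : 0 ≤ Real.sqrt (∫ x : ℝ, f x ^ 2) := Real.sqrt_nonneg _
  linarith
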